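/- Let (X,d) be a compact metric space, (f_n) continuous self-maps, x,y ∈ X, N ∈ ℕ, and suppose 0 < t₁ < t satisfies: d(u,v) < t₁ implies d(f_m^i(u), f_m^i(v)) < t for all m ∈ ℕ and 1 ≤ i ≤ N. Then for every l ∈ ℕ, #{0 ≤ i < N·m_l : d(f_1^i(x), f_1^i(y)) < t} ≥ N·#{0 ≤ i < m_l : d(f_1^{iN}(x), f_1^{iN}(y)) < t₁} for every m_l ∈ ℕ. Consequently, Φ*(f_{1,∞}, x, y, t) ≥ Φ*(f_{1,∞}^N, x, y, t₁). -/

import Mathlib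

/-!
A time `n` at which the orbits of `x` and `y` are `t₁`-close starts a block `n, …, n + N - 1`
of times at which, by the equicontinuity hypothesis applied to the maps from time `n` on, they are
`t`-close. The blocks starting at the multiples `iN` are disjoint, so every `t₁`-close time of
the `N`-step orbit yields `N` distinct `t`-close times of the full orbit; dividing by `N m` and
passing to the limsup along the subsequence `N m` gives the density inequality.
-/

open Filter
open scoped Classical

variable {X : Type*}

/-- `orb f n = f_n ∘ ⋯ ∘ f_1` (0-based: `f k` is the `(k+1)`-st map). -/
def orb (f : ℕ → X → X) : ℕ → X → X
  | 0 => id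
  | n + 1 => f n ∘ orb f n

/-- `compFrom f m k = f_{m+k-1} ∘ ⋯ ∘ f_m` (0-based indexing of the sequence `f`). -/
def compFrom (f : ℕ → X → X) (m : ℕ) : ℕ → X → X
  | 0 => id
  | k + 1 => f (m + k) ∘ compFrom f m k

/-- Upper distributional density along the time sequence `τ`. -/
noncomputable def phiUpp [MetricSpace X] (f : ℕ → X → X) (τ : ℕ → ℕ) (x y : X) (t : ℝ) : ℝ :=
  limsup (fun n =>
    (((Finset.range n).filter
      (fun i => dist (orb f (τ i) x) (orb f (τ i) y) < t)).card : ℝ) / n) atTop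

lemma orb_add (f : ℕ → X → X) (m k : ℕ) (x : X) :
    orb f (m + k) x = compFrom f m k (orb f m x) := by
  induction k with
  | zero => rfl
  | succ k ih => simp [orb, compFrom, ih]

lemma dist_orb_add_lt_of_dist_orb_lt [MetricSpace X] {f : ℕ → X → X} {x y : X} {N : ℕ}
    {t₁ t : ℝ} (ht : t₁ ≤ t)
    (hequi : ∀ u v : X, dist u v < t₁ → ∀ m : ℕ, ∀ i : ℕ, 1 ≤ i → i ≤ N →
      dist (compFrom f m i u) (compFrom f m i v) < t)
    {n s : ℕ} (hs : s ≤ N) (hn : dist (orb f n x) (orb f n y) < t₁) :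
    dist (orb f (n + s) x) (orb f (n + s) y) < t := by
  rcases Nat.eq_zero_or_pos s with rfl | hs0
  · exact hn.trans_le ht
  · rw [orb_add, orb_add]
    exact hequi _ _ hn n s hs0 hs

lemma mul_card_filter_range_le_card_filter_range {P Q : ℕ → Prop} {N : ℕ}
    (hQP : ∀ i, Q i → ∀ s < N, P (i * N + s)) (m : ℕ) :
    N * ((Finset.range m).filter Q).card ≤ ((Finset.range (N * m)).filter P).card := by
  calc N * ((Finset.range m).filter Q).card
      = (((Finset.range m).filter Q) ×ˢ Finset.range N).card := by
        rw [Finset.card_product, Finset.card_range, mul_comm]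
    _ ≤ ((Finset.range (N * m)).filter P).card := by
      refine Finset.card_le_card_of_injOn (fun p => p.1 * N + p.2) ?_ ?_
      · rintro ⟨i, s⟩ hp
        simp only [Finset.coe_product, Finset.coe_filter, Finset.coe_range, Set.mem_prod,
          Set.mem_Iio, Finset.mem_range] at hp ⊢
        obtain ⟨⟨him, hQ⟩, hsN⟩ := hp
        exact ⟨by nlinarith, hQP i hQ s hsN⟩
      · rintro ⟨i, s⟩ hp ⟨j, r⟩ hq hij
        simp only [Finset.coe_product, Finset.coe_filter, Finset.coe_range, Set.mem_prod,
          Set.mem_Iio, Finset.mem_range] at hp hq hij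
        have hN : 0 < N := by omega
        -- `i` and `j` are both the quotient of `i * N + s = j * N + r` by `N`
        have hi : i = j := by
          have h₁ := Nat.add_mul_div_right s i hN
          have h₂ := Nat.add_mul_div_right r j hN
          rw [Nat.div_eq_of_lt hp.2, add_comm s, hij] at h₁
          rw [Nat.div_eq_of_lt hq.2, add_comm r] at h₂
          omega
        subst hi
        simp only [Prod.mk.injEq, true_and]
        omega

noncomputable def densityUpTo (P : ℕ → Prop) (n : ℕ) : ℝ :=
  (((Finset.range n).filter P).card : ℝ) / n

lemma densityUpTo_nonneg (P : ℕ → Prop) (n : ℕ) : 0 ≤ densityUpTo P n := by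
  unfold densityUpTo
  positivity

lemma densityUpTo_le_one (P : ℕ → Prop) (n : ℕ) : densityUpTo P n ≤ 1 := by
  unfold densityUpTo
  rcases Nat.eq_zero_or_pos n with rfl | hn
  · simp
  · rw [div_le_one (by exact_mod_cast hn)]
    exact_mod_cast (Finset.card_filter_le _ _).trans_eq (Finset.card_range n)

lemma densityUpTo_le_densityUpTo_mul {P Q : ℕ → Prop} {N m : ℕ} (hN : 0 < N)
    (hcard : N * ((Finset.range m).filter Q).card ≤ ((Finset.range (N * m)).filter P).card) :
    densityUpTo Q m ≤ densityUpTo P (N * m) := by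
  have hN' : (N : ℝ) ≠ 0 := by exact_mod_cast hN.ne'
  calc densityUpTo Q m
      = (N * ((Finset.range m).filter Q).card : ℝ) / (N * m) :=
        (mul_div_mul_left _ _ hN').symm
    _ ≤ (((Finset.range (N * m)).filter P).card : ℝ) / (N * m) := by
        gcongr
        exact_mod_cast hcard
    _ = densityUpTo P (N * m) := by
        rw [densityUpTo, Nat.cast_mul]

lemma limsup_densityUpTo_le {P Q : ℕ → Prop} {N : ℕ} (hN : 0 < N)
    (hcard : ∀ m, N * ((Finset.range m).filter Q).card ≤
      ((Finset.range (N * m)).filter P).card) :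
    limsup (densityUpTo Q) atTop ≤ limsup (densityUpTo P) atTop := by
  have hbdd : IsBoundedUnder (· ≤ ·) atTop (densityUpTo P) :=
    isBoundedUnder_of ⟨1, densityUpTo_le_one P⟩
  have hcobdd (R : ℕ → Prop) (l : Filter ℕ) [l.NeBot] :
      IsCoboundedUnder (· ≤ ·) l (densityUpTo R) :=
    isCoboundedUnder_le_of_le l (densityUpTo_nonneg R)
  have hmul : Tendsto (N * ·) atTop atTop :=
    tendsto_atTop_mono (fun m => Nat.le_mul_of_pos_left m hN) tendsto_id
  calc limsup (densityUpTo Q) atTop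
      ≤ limsup (densityUpTo P ∘ (N * ·)) atTop :=
        limsup_le_limsup
          (Eventually.of_forall fun m => densityUpTo_le_densityUpTo_mul hN (hcard m))
          (hcobdd Q atTop) (isBoundedUnder_of ⟨1, fun m => densityUpTo_le_one P (N * m)⟩)
    _ ≤ limsup (densityUpTo P) atTop := hmul.limsup_comp_le_limsup (hcobdd P _) hbdd

theorem stmt_19 [MetricSpace X] (f : ℕ → X → X)
    (x y : X) (N : ℕ) (hN : 0 < N)
    (t₁ t : ℝ) (h1 : t₁ < t)
    (hequi : ∀ u v : X, dist u v < t₁ → ∀ m : ℕ, ∀ i : ℕ, 1 ≤ i → i ≤ N →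
      dist (compFrom f m i u) (compFrom f m i v) < t) :
    (∀ m : ℕ,
      N * ((Finset.range m).filter
          (fun i => dist (orb f (i * N) x) (orb f (i * N) y) < t₁)).card
        ≤ ((Finset.range (N * m)).filter
          (fun i => dist (orb f i x) (orb f i y) < t)).card) ∧
    phiUpp f (fun i => N * i) x y t₁ ≤ phiUpp f id x y t := by
  have hblock : ∀ n, dist (orb f n x) (orb f n y) < t₁ →
      ∀ s < N, dist (orb f (n + s) x) (orb f (n + s) y) < t :=
    fun n hn s hs => dist_orb_add_lt_of_dist_orb_lt h1.le hequi hs.le hn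
  refine ⟨mul_card_filter_range_le_card_filter_range fun i => hblock (i * N), ?_⟩
  exact limsup_densityUpTo_le hN
    (mul_card_filter_range_le_card_filter_range fun i hi => hblock (i * N) (by rwa [mul_comm]))
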